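/- If X ~ H'(θ,ν), then E(X) = θ. -/

import Mathlib

/-! The Möbius substitution `x = (u + θ) / (1 + θ u)`, a bijection of `(-1, 1)` with
Jacobian `(1 - θ²) / (1 + θ u)²`, turns `(x - θ) · hDensity θ ν x` into `u` times an even
function of `u`, so `∫ (x - θ) · hDensity θ ν x dx = 0` over `(-1, 1)`. Since the law of `X`
is a probability measure carried by `(-1, 1)`, `E(X) - θ` is exactly this integral. -/

open MeasureTheory Real

/-- The Beta function. -/
noncomputable def Beta (a b : ℝ) : ℝ := Real.Gamma a * Real.Gamma b / Real.Gamma (a + b)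

/-- The density of the `H'(θ,ν)` distribution of Leipnik/McCullagh on `(-1,1)`. -/
noncomputable def hDensity (θ ν x : ℝ) : ℝ :=
  (1 - θ ^ 2) / Beta (ν + 1 / 2) (1 / 2)
    * (1 - x ^ 2) ^ (ν - 1 / 2) / (1 - 2 * θ * x + θ ^ 2) ^ (ν + 1)

open Set

noncomputable def mobius (θ u : ℝ) : ℝ := (u + θ) / (1 + θ * u)

section Mobius

variable {θ : ℝ}

lemma one_add_mul_pos_of_mem_Ioo {u : ℝ} (hθ : θ ∈ Ioo (-1 : ℝ) 1)
    (hu : u ∈ Ioo (-1 : ℝ) 1) :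
    0 < 1 + θ * u := by
  have : |θ * u| < 1 := by
    rw [abs_mul]
    exact mul_lt_one_of_nonneg_of_lt_one_left (abs_nonneg _) (abs_lt.2 hθ) (abs_lt.2 hu).le
  linarith [neg_abs_le (θ * u)]

lemma mobius_mapsTo (hθ : θ ∈ Ioo (-1 : ℝ) 1) :
    MapsTo (mobius θ) (Ioo (-1) 1) (Ioo (-1) 1) := by
  intro u hu
  have hs := one_add_mul_pos_of_mem_Ioo hθ hu
  obtain ⟨hθ₁, hθ₂⟩ := hθ
  obtain ⟨hu₁, hu₂⟩ := hu
  constructor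
  · rw [mobius, lt_div_iff₀ hs]; nlinarith
  · rw [mobius, div_lt_one hs]; nlinarith

lemma mobius_neg_mobius {u : ℝ} (hθ : θ ^ 2 ≠ 1) (hu : 1 + θ * u ≠ 0) :
    mobius (-θ) (mobius θ u) = u := by
  have hx : mobius θ u * (1 + θ * u) = u + θ := div_mul_cancel₀ _ hu
  have h_denom : (1 + -θ * mobius θ u) * (1 + θ * u) = 1 - θ ^ 2 := by
    linear_combination (-θ) * hx
  have h_denom_ne : 1 + -θ * mobius θ u ≠ 0 :=
    left_ne_zero_of_mul (h_denom ▸ sub_ne_zero.2 (Ne.symm hθ))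
  rw [mobius, div_eq_iff h_denom_ne]
  apply mul_right_cancel₀ hu
  linear_combination (1 + θ * u) * hx

lemma mobius_bijOn (hθ : θ ∈ Ioo (-1 : ℝ) 1) :
    BijOn (mobius θ) (Ioo (-1) 1) (Ioo (-1) 1) := by
  have hθ_neg : -θ ∈ Ioo (-1 : ℝ) 1 := ⟨by linarith [hθ.2], by linarith [hθ.1]⟩
  have hθ_sq : θ ^ 2 ≠ 1 := by nlinarith [hθ.1, hθ.2]
  refine InvOn.bijOn ⟨fun u hu => ?_, fun x hx => ?_⟩ (mobius_mapsTo hθ)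
    (mobius_mapsTo hθ_neg)
  · exact mobius_neg_mobius hθ_sq (one_add_mul_pos_of_mem_Ioo hθ hu).ne'
  · simpa using
      mobius_neg_mobius (by rwa [neg_sq]) (one_add_mul_pos_of_mem_Ioo hθ_neg hx).ne'

lemma hasDerivAt_mobius {u : ℝ} (hu : 1 + θ * u ≠ 0) :
    HasDerivAt (mobius θ) ((1 - θ ^ 2) / (1 + θ * u) ^ 2) u := by
  have h :=
    ((hasDerivAt_id' u).add_const θ).div (((hasDerivAt_id' u).const_mul θ).const_add 1) hu
  exact h.congr_deriv (by ring)

theorem setIntegral_Ioo_eq_setIntegral_comp_mobius {E : Type*} [NormedAddCommGroup E]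
    [NormedSpace ℝ E] (hθ : θ ∈ Ioo (-1 : ℝ) 1) (f : ℝ → E) :
    ∫ x in Ioo (-1) 1, f x =
      ∫ u in Ioo (-1) 1, ((1 - θ ^ 2) / (1 + θ * u) ^ 2) • f (mobius θ u) := by
  have hbij := mobius_bijOn hθ
  have hT : 0 < 1 - θ ^ 2 := by nlinarith [hθ.1, hθ.2]
  calc ∫ x in Ioo (-1) 1, f x = ∫ x in mobius θ '' Ioo (-1) 1, f x := by rw [hbij.image_eq]
    _ = ∫ u in Ioo (-1) 1, |(1 - θ ^ 2) / (1 + θ * u) ^ 2| • f (mobius θ u) :=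
      integral_image_eq_integral_abs_deriv_smul measurableSet_Ioo
        (fun u hu => (hasDerivAt_mobius (one_add_mul_pos_of_mem_Ioo hθ hu).ne').hasDerivWithinAt)
        hbij.injOn f
    _ = _ := by
      refine setIntegral_congr_fun measurableSet_Ioo fun u hu => ?_
      rw [abs_of_pos (div_pos hT (pow_pos (one_add_mul_pos_of_mem_Ioo hθ hu) 2))]

end Mobius

theorem intervalIntegral.integral_eq_zero_of_odd {E : Type*} [NormedAddCommGroup E]
    [NormedSpace ℝ E] {f : ℝ → E} (hf : f.Odd) (a : ℝ) :
    ∫ x in -a..a, f x = 0 := by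
  have h := intervalIntegral.integral_comp_neg (a := -a) (b := a) f
  simp only [hf _, intervalIntegral.integral_neg, neg_neg] at h
  have h2 : (2 : ℝ) • ∫ x in -a..a, f x = 0 := by
    rw [two_smul]; nth_rewrite 1 [← h]; exact neg_add_cancel _
  exact (smul_eq_zero.1 h2).resolve_left two_ne_zero

section

variable {X : Type*} [MeasurableSpace X] {μ : Measure X} {s : Set X} {f : X → ℝ}

lemma ae_mem_withDensity_ofReal_indicator (hs : MeasurableSet s) (hf : Measurable f) :
    ∀ᵐ x ∂μ.withDensity (fun x => ENNReal.ofReal (s.indicator f x)), x ∈ s := by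
  rw [ae_withDensity_iff (hf.indicator hs).ennreal_ofReal]
  refine ae_of_all _ fun x hx => ?_
  by_contra hxs
  simp [indicator_of_notMem hxs] at hx

lemma withDensity_ofReal_indicator_ne_zero (hs : MeasurableSet s) (hf : Measurable f)
    (hpos : ∀ x ∈ s, 0 < f x) (hμs : μ s ≠ 0) :
    μ.withDensity (fun x => ENNReal.ofReal (s.indicator f x)) ≠ 0 := by
  intro h
  have h_null :=
    ae_iff.1 ((withDensity_eq_zero_iff (hf.indicator hs).ennreal_ofReal.aemeasurable).1 h)
  refine hμs (measure_mono_null (fun x hx => ?_) h_null)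
  simp [indicator_of_mem hx, hpos x hx]

lemma integral_withDensity_ofReal_indicator {E : Type*} [NormedAddCommGroup E] [NormedSpace ℝ E]
    (hs : MeasurableSet s) (hf : Measurable f) (hf₀ : ∀ x ∈ s, 0 ≤ f x) (g : X → E) :
    ∫ x, g x ∂μ.withDensity (fun x => ENNReal.ofReal (s.indicator f x)) =
      ∫ x in s, f x • g x ∂μ := by
  rw [integral_withDensity_eq_integral_toReal_smul (hf.indicator hs).ennreal_ofReal
    (ae_of_all _ fun _ => ENNReal.ofReal_lt_top), ← integral_indicator hs]
  congr 1 with x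
  by_cases hx : x ∈ s <;> simp [hx, hf₀ x]

end

lemma Beta_pos {a b : ℝ} (ha : 0 < a) (hb : 0 < b) : 0 < Beta a b :=
  div_pos (mul_pos (Gamma_pos_of_pos ha) (Gamma_pos_of_pos hb)) (Gamma_pos_of_pos (add_pos ha hb))

lemma hDensity_pos {θ ν x : ℝ} (hθ : θ ∈ Ioo (-1 : ℝ) 1) (hν : -1 / 2 < ν)
    (hx : x ∈ Ioo (-1 : ℝ) 1) : 0 < hDensity θ ν x := by
  have hT : 0 < 1 - θ ^ 2 := by nlinarith [hθ.1, hθ.2]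
  have hA : 0 < 1 - x ^ 2 := by nlinarith [hx.1, hx.2]
  have hQ : 0 < 1 - 2 * θ * x + θ ^ 2 := by nlinarith [sq_nonneg (x - θ)]
  have hB : 0 < Beta (ν + 1 / 2) (1 / 2) := Beta_pos (by linarith) one_half_pos
  unfold hDensity
  positivity

lemma measurable_hDensity (θ ν : ℝ) : Measurable (hDensity θ ν) := by
  unfold hDensity
  fun_prop

lemma mobius_jacobian_mul_sub_mul_hDensity {θ ν u : ℝ} (hθ : θ ∈ Ioo (-1 : ℝ) 1)
    (hu : u ∈ Ioo (-1 : ℝ) 1) :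
    (1 - θ ^ 2) / (1 + θ * u) ^ 2 * ((mobius θ u - θ) * hDensity θ ν (mobius θ u)) =
      u * ((1 - θ ^ 2) ^ (3 / 2 : ℝ) / Beta (ν + 1 / 2) (1 / 2) * (1 - u ^ 2) ^ (ν - 1 / 2)
        / (1 - θ ^ 2 * u ^ 2) ^ (ν + 1)) := by
  have hs := one_add_mul_pos_of_mem_Ioo hθ hu
  have ht : 0 < 1 + θ * -u :=
    one_add_mul_pos_of_mem_Ioo hθ ⟨by linarith [hu.2], by linarith [hu.1]⟩
  have hT : 0 < 1 - θ ^ 2 := by nlinarith [hθ.1, hθ.2]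
  have hA : 0 < 1 - u ^ 2 := by nlinarith [hu.1, hu.2]
  have hW : 0 < 1 - θ ^ 2 * u ^ 2 := by nlinarith
  have hx : mobius θ u * (1 + θ * u) = u + θ := div_mul_cancel₀ _ hs.ne'
  have h_sub : mobius θ u - θ = u * (1 - θ ^ 2) / (1 + θ * u) := by
    rw [eq_div_iff hs.ne']; linear_combination hx
  have h_one_sub_sq : 1 - mobius θ u ^ 2 = (1 - u ^ 2) * (1 - θ ^ 2) / (1 + θ * u) ^ 2 := by
    rw [eq_div_iff (by positivity)]
    linear_combination (-(u + θ) - mobius θ u * (1 + θ * u)) * hx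
  have h_quad : 1 - 2 * θ * mobius θ u + θ ^ 2 =
      (1 - θ ^ 2) * (1 - θ ^ 2 * u ^ 2) / (1 + θ * u) ^ 2 := by
    rw [eq_div_iff (by positivity)]; linear_combination (-2 * θ * (1 + θ * u)) * hx
  -- Splitting `ν + 1 = (ν - 1/2) + 3/2` makes the powers of `1 + θ u` cancel.
  have h_sq :
      ((1 + θ * u) ^ 2) ^ (ν + 1) = ((1 + θ * u) ^ 2) ^ (ν - 1 / 2) * (1 + θ * u) ^ 3 := by
    rw [← rpow_natCast_mul hs.le, ← rpow_natCast_mul hs.le, ← rpow_natCast, ← rpow_add hs]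
    norm_num; ring_nf
  have h_T :
      (1 - θ ^ 2) ^ (ν + 1) = (1 - θ ^ 2) ^ (ν - 1 / 2) * (1 - θ ^ 2) ^ (3 / 2 : ℝ) := by
    rw [← rpow_add hT]; ring_nf
  have h_T3 : (1 - θ ^ 2) ^ 3 = (1 - θ ^ 2) ^ (3 / 2 : ℝ) * (1 - θ ^ 2) ^ (3 / 2 : ℝ) := by
    rw [← rpow_add hT, ← rpow_natCast]; norm_num
  rw [hDensity, h_sub, h_one_sub_sq, h_quad, div_rpow (by positivity) (by positivity),
    div_rpow (by positivity) (by positivity), mul_rpow hA.le hT.le, mul_rpow hT.le hW.le, h_sq,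
    h_T]
  field_simp
  rw [h_T3]
  ring

lemma setIntegral_sub_mul_hDensity_eq_zero {θ : ℝ} (hθ : θ ∈ Ioo (-1 : ℝ) 1) (ν : ℝ) :
    ∫ x in Ioo (-1) 1, (x - θ) * hDensity θ ν x = 0 := by
  rw [setIntegral_Ioo_eq_setIntegral_comp_mobius hθ,
    setIntegral_congr_fun measurableSet_Ioo fun u hu =>
      (smul_eq_mul _ _).trans (mobius_jacobian_mul_sub_mul_hDensity (ν := ν) hθ hu),
    ← integral_Ioc_eq_integral_Ioo, ← intervalIntegral.integral_of_le (by norm_num)]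
  exact intervalIntegral.integral_eq_zero_of_odd (fun u => by simp only [neg_sq, neg_mul]) 1

/-- if `X ~ H'(θ,ν)` then `E(X) = θ`. -/
theorem hprime_mean {α : Type*} [MeasurableSpace α] (P : Measure α)
    [IsProbabilityMeasure P] (θ ν : ℝ) (hθ : θ ∈ Set.Ioo (-1 : ℝ) 1) (hν : -1 / 2 < ν)
    (X : α → ℝ)
    (hX : Measure.map X P = volume.withDensity
      (fun x => ENNReal.ofReal ((Set.Ioo (-1 : ℝ) 1).indicator (hDensity θ ν) x))) :
    ∫ ω, X ω ∂P = θ := by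
  set μ := volume.withDensity
    (fun x => ENNReal.ofReal ((Set.Ioo (-1 : ℝ) 1).indicator (hDensity θ ν) x))
  have hX_meas : AEMeasurable X P := .of_map_ne_zero <| hX ▸
    withDensity_ofReal_indicator_ne_zero measurableSet_Ioo (measurable_hDensity θ ν)
      (fun x hx => hDensity_pos hθ hν hx) (by simp)
  have : IsProbabilityMeasure μ := hX ▸ Measure.isProbabilityMeasure_map hX_meas
  have h_int : Integrable (fun x => x) μ :=
    .of_mem_Icc (-1) 1 aemeasurable_id <|
      (ae_mem_withDensity_ofReal_indicator measurableSet_Ioo (measurable_hDensity θ ν)).mono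
        fun _ hx => Ioo_subset_Icc_self hx
  calc ∫ ω, X ω ∂P = ∫ x, x ∂μ := by
        rw [← hX]; exact (integral_map hX_meas aestronglyMeasurable_id).symm
    _ = ∫ x, (x - θ) ∂μ + θ := by simp [integral_sub h_int (integrable_const θ)]
    _ = θ := by
      rw [integral_withDensity_ofReal_indicator measurableSet_Ioo (measurable_hDensity θ ν)
        (fun x hx => (hDensity_pos hθ hν hx).le)]
      simp only [smul_eq_mul, mul_comm (hDensity θ ν _), setIntegral_sub_mul_hDensity_eq_zero hθ,
        zero_add]
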